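/- arXiv:1805.10998 — 5 statements merged into one kernel-verified Lean document; each statement's English description precedes it below -/
import Mathlib

section
/- For every n ≥ 1 and every k ≥ 0, the set of CLS-sequences of length n containing exactly k occurrences of the letter X is finite and its cardinality equals the Legendre-Stirling number of the second kind LS(n,k). -/
/-- Legendre-Stirling numbers of the second kind. -/
def LS : ℕ → ℕ → ℕ
  | 0, 0 => 1
  | 0, _ + 1 => 0
  | _ + 1, 0 => 0
  | n + 1, k + 1 => LS n k + (k + 1) * (k + 2) * LS n (k + 1)

/-- The alphabet for CLS-sequences: a letter `X`, letters `A i j`,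
letters `B s` and letters `Bbar s`. -/
inductive CLSLetter where
  | X : CLSLetter
  | A : ℕ → ℕ → CLSLetter
  | B : ℕ → CLSLetter
  | Bbar : ℕ → CLSLetter
  deriving DecidableEq

/-- The number of occurrences of the letter `X` among the first `m` entries
(indices `l` with `l < m` in 0-indexed notation). -/
def nX {n : ℕ} (y : Fin n → CLSLetter) (m : ℕ) : ℕ :=
  (Finset.univ.filter (fun l : Fin n => (l : ℕ) < m ∧ y l = CLSLetter.X)).card

/-- `y` is a CLS-sequence: `y₁ = X` and each later letter obeys the index
constraints with respect to the number of `X`'s occurring strictly before it. -/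
def IsCLS {n : ℕ} (y : Fin n → CLSLetter) : Prop :=
  (∀ i : Fin n, (i : ℕ) = 0 → y i = CLSLetter.X) ∧
  ∀ i : Fin n, (i : ℕ) ≠ 0 →
    match y i with
    | CLSLetter.X => True
    | CLSLetter.A a b =>
        1 ≤ a ∧ a ≤ nX y (i : ℕ) ∧ 1 ≤ b ∧ b ≤ nX y (i : ℕ) ∧ a ≠ b
    | CLSLetter.B s => 1 ≤ s ∧ s ≤ nX y (i : ℕ)
    | CLSLetter.Bbar s => 1 ≤ s ∧ s ≤ nX y (i : ℕ)

/-!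
Deleting the last letter of a CLS-sequence of length `n + 1` with `k + 1` letters `X` leaves a
CLS-sequence of length `n`. Either the deleted letter was `X`, and `k` letters `X` remain, or it
was one of the letters admissible after `k + 1` letters `X` other than `X` itself: the
`(k + 1) k` letters `A i j` and the `2 (k + 1)` letters `B s`, `B̄ s`. This gives
`LS (n + 1) (k + 1) = LS n k + (k + 1) (k + 2) LS n (k + 1)`.
-/

open Finset

namespace CLSLetter

def Admissible (m : ℕ) : CLSLetter → Prop
  | X => True
  | A a b => 1 ≤ a ∧ a ≤ m ∧ 1 ≤ b ∧ b ≤ m ∧ a ≠ b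
  | B s => 1 ≤ s ∧ s ≤ m
  | Bbar s => 1 ≤ s ∧ s ≤ m

theorem admissible_zero_iff {c : CLSLetter} : Admissible 0 c ↔ c = X := by
  cases c <;> simp [Admissible] <;> omega

def nonXAdmissible (m : ℕ) : Finset CLSLetter :=
  ((Icc 1 m).offDiag.image fun p => A p.1 p.2) ∪ (Icc 1 m).image B ∪ (Icc 1 m).image Bbar

theorem mem_nonXAdmissible {m : ℕ} {c : CLSLetter} :
    c ∈ nonXAdmissible m ↔ c ≠ X ∧ Admissible m c := by
  cases c <;> simp [nonXAdmissible, Admissible]; omega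

theorem card_nonXAdmissible (m : ℕ) : #(nonXAdmissible m) = m * (m + 1) := by
  rw [nonXAdmissible, card_union_of_disjoint, card_union_of_disjoint,
    card_image_of_injective _ fun p q h => Prod.ext (A.inj h).1 (A.inj h).2,
    card_image_of_injective _ fun _ _ => B.inj, card_image_of_injective _ fun _ _ => Bbar.inj,
    offDiag_card, Nat.card_Icc, Nat.add_sub_cancel, Nat.sub_add_cancel (Nat.le_mul_self m)]
  · ring
  all_goals simp only [disjoint_left, mem_union, mem_image]; grind

end CLSLetter

open CLSLetter

theorem nX_zero {n : ℕ} (y : Fin n → CLSLetter) : nX y 0 = 0 := by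
  simp [nX]

theorem nX_self {n : ℕ} (y : Fin n → CLSLetter) : nX y n = #{l | y l = X} := by
  simp [nX]

theorem nX_snoc_of_le {n m : ℕ} (z : Fin n → CLSLetter) (c : CLSLetter) (hm : m ≤ n) :
    nX (Fin.snoc z c) m = nX z m := by
  rw [nX, nX, card_filter, card_filter, Fin.sum_univ_castSucc]
  simp [Nat.not_lt.mpr hm]

theorem card_snoc_eq_X {n : ℕ} (z : Fin n → CLSLetter) (c : CLSLetter) :
    #{l | (Fin.snoc z c : Fin (n + 1) → CLSLetter) l = X} =
      #{l | z l = X} + if c = X then 1 else 0 := by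
  rw [card_filter, card_filter, Fin.sum_univ_castSucc]
  simp

/-- The condition `y₁ = X` is admissibility of `y₁` after no `X`, by `admissible_zero_iff`. -/
theorem isCLS_iff_forall_admissible {n : ℕ} (y : Fin n → CLSLetter) :
    IsCLS y ↔ ∀ i : Fin n, Admissible (nX y i) (y i) := by
  refine ⟨fun ⟨h0, h⟩ i => ?_, fun h => ⟨fun i hi => ?_, fun i hi => h i⟩⟩
  · by_cases hi : (i : ℕ) = 0
    · rw [hi, nX_zero, admissible_zero_iff]
      exact h0 i hi
    · exact h i hi
  · simpa [hi, nX_zero, admissible_zero_iff] using h i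

theorem isCLS_snoc {n : ℕ} (z : Fin n → CLSLetter) (c : CLSLetter) :
    IsCLS (Fin.snoc z c : Fin (n + 1) → CLSLetter) ↔ IsCLS z ∧ Admissible (nX z n) c := by
  simp only [isCLS_iff_forall_admissible, Fin.forall_fin_succ', Fin.snoc_castSucc,
    Fin.snoc_last, Fin.val_castSucc, Fin.val_last, nX_snoc_of_le z c (Fin.is_le _)]

def clsSet (n k : ℕ) : Set (Fin n → CLSLetter) := {y | IsCLS y ∧ #{l | y l = X} = k}

theorem clsSet_zero (k : ℕ) : clsSet 0 k = {_y | k = 0} := by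
  ext y
  simp [clsSet, IsCLS, eq_comm]

theorem clsSet_succ_zero (n : ℕ) : clsSet (n + 1) 0 = ∅ := by
  refine Set.eq_empty_of_forall_notMem fun y ⟨hy, hcard⟩ => ?_
  refine (card_pos.mpr ⟨0, ?_⟩).ne' hcard
  simpa using hy.1 0 rfl

theorem clsSet_succ_succ (n k : ℕ) :
    clsSet (n + 1) (k + 1) = (Fin.snoc · X) '' clsSet n k ∪
      Function.uncurry Fin.snoc '' (clsSet n (k + 1) ×ˢ ↑(nonXAdmissible (k + 1))) := by
  ext y
  obtain ⟨z, c, rfl⟩ : ∃ z c, y = Fin.snoc z c :=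
    ⟨Fin.init y, y (Fin.last n), (Fin.snoc_init_self y).symm⟩
  rcases eq_or_ne c X with rfl | hc
  · simp [clsSet, isCLS_snoc, card_snoc_eq_X, mem_nonXAdmissible, Admissible]
  · by_cases hcard : #{l | z l = X} = k + 1 <;>
      simp [clsSet, isCLS_snoc, card_snoc_eq_X, nX_self, mem_nonXAdmissible, hc, hc.symm, hcard]

theorem encard_clsSet : ∀ n k, (clsSet n k).encard = LS n k
  | 0, 0 => by simp [clsSet_zero, LS]
  | 0, k + 1 => by simp [clsSet_zero, LS]
  | n + 1, 0 => by simp [clsSet_succ_zero, LS]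
  | n + 1, k + 1 => by
    rw [clsSet_succ_succ, Set.encard_union_eq ?_,
      (Fin.snoc_left_injective (α := fun _ => CLSLetter) X).encard_image,
      Fin.snoc_injective2.uncurry.encard_image, Set.encard_prod, Set.encard_coe_eq_coe_finsetCard,
      card_nonXAdmissible, encard_clsSet n k, encard_clsSet n (k + 1), LS]
    · push_cast
      ring
    · rw [Set.disjoint_left]
      rintro _ ⟨z, -, rfl⟩ ⟨⟨z', c⟩, ⟨-, hc⟩, h⟩
      exact (mem_nonXAdmissible.mp hc).1 (Fin.snoc_inj.mp h).2

theorem cls_card_general (n k : ℕ) :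
    ({y : Fin n → CLSLetter | IsCLS y ∧
        (Finset.univ.filter (fun l : Fin n => y l = CLSLetter.X)).card = k}).Finite ∧
    ({y : Fin n → CLSLetter | IsCLS y ∧
        (Finset.univ.filter (fun l : Fin n => y l = CLSLetter.X)).card = k}).ncard
      = LS n k := by
  have h := encard_clsSet n k
  exact ⟨Set.finite_of_encard_eq_coe h, (congrArg ENat.toNat h).trans (ENat.toNat_natCast _)⟩

theorem cls_card (n k : ℕ) (hn : 1 ≤ n) :
    ({y : Fin n → CLSLetter | IsCLS y ∧
        (Finset.univ.filter (fun l : Fin n => y l = CLSLetter.X)).card = k}).Finite ∧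
    ({y : Fin n → CLSLetter | IsCLS y ∧
        (Finset.univ.filter (fun l : Fin n => y l = CLSLetter.X)).card = k}).ncard
      = LS n k :=
  cls_card_general n k
end

section
/- For every positive integer k and every n ≥ 1, LS(n+k, n) = 2^k · Σ over all k-tuples (t_1, t_2, …, t_k) of integers with 1 ≤ t_1 ≤ t_2 ≤ ⋯ ≤ t_k ≤ n of the product ∏_{j=1}^{k} C(t_j + 1, 2), where C(·,·) denotes the usual binomial coefficient. (Equivalently, LS(n+k,n) = 2^k Σ_{t_k=1}^{n} C(t_k+1,2) Σ_{t_{k-1}=1}^{t_k} C(t_{k-1}+1,2) ⋯ Σ_{t_1=1}^{t_2} C(t_1+1,2).) -/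
open Finset

theorem Fin.monotone_snoc_iff {α : Type*} [Preorder α] {k : ℕ} {s : Fin k → α} {x : α} :
    Monotone (Fin.snoc s x : Fin (k + 1) → α) ↔ Monotone s ∧ ∀ j, s j ≤ x := by
  constructor
  · intro h
    refine ⟨fun i j hij => ?_, fun j => ?_⟩
    · simpa using h (Fin.castSucc_le_castSucc_iff.mpr hij)
    · simpa using h (Fin.le_last j.castSucc)
  · rintro ⟨hs, hx⟩ i j hij
    induction j using Fin.lastCases with
    | last =>
      induction i using Fin.lastCases with
      | last => exact le_rfl
      | cast i => simpa using hx i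
    | cast j =>
      induction i using Fin.lastCases with
      | last => exact absurd hij (not_le.mpr (Fin.castSucc_lt_last j))
      | cast i => simpa using hs (Fin.castSucc_le_castSucc_iff.mp hij)

theorem LS_eq_zero_of_lt : ∀ {n k : ℕ}, n < k → LS n k = 0
  | 0, _ + 1, _ => rfl
  | n + 1, k + 1, h => by
    rw [LS, LS_eq_zero_of_lt (by omega), LS_eq_zero_of_lt (by omega), mul_zero, add_zero]

theorem LS_self : ∀ n : ℕ, LS n n = 1
  | 0 => rfl
  | n + 1 => by rw [LS, LS_self n, LS_eq_zero_of_lt n.lt_succ_self, mul_zero, add_zero]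

section chainSum

variable {R : Type*} [CommSemiring R]

/-- The complete homogeneous symmetric polynomial `h_k(f 1, …, f m)`, expanded along its largest
index. -/
def chainSum (f : ℕ → R) : ℕ → ℕ → R
  | 0, _ => 1
  | k + 1, m => ∑ t ∈ Icc 1 m, f t * chainSum f k t

theorem chainSum_zero_left (f : ℕ → R) (m : ℕ) : chainSum f 0 m = 1 := rfl

theorem chainSum_succ_zero (f : ℕ → R) (k : ℕ) : chainSum f (k + 1) 0 = 0 := by
  simp [chainSum]

theorem chainSum_succ_succ (f : ℕ → R) (k m : ℕ) :
    chainSum f (k + 1) (m + 1) = chainSum f (k + 1) m + f (m + 1) * chainSum f k (m + 1) := by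
  rw [chainSum, chainSum, sum_Icc_succ_top (by omega)]

theorem chainSum_const_mul (c : R) (f : ℕ → R) :
    ∀ k m, chainSum (fun t => c * f t) k m = c ^ k * chainSum f k m
  | 0, _ => by simp [chainSum]
  | k + 1, m => by
    simp only [chainSum, chainSum_const_mul c f k, mul_sum, pow_succ]
    exact sum_congr rfl fun _ _ => by ring

end chainSum

theorem LS_add_self_eq_chainSum (k m : ℕ) :
    LS (m + k) m = chainSum (fun t => t * (t + 1)) k m := by
  induction k generalizing m with
  | zero => rw [add_zero, LS_self, chainSum_zero_left]
  | succ k ihk =>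
    induction m with
    | zero => rw [zero_add, LS, chainSum_succ_zero]
    | succ m ihm =>
      rw [chainSum_succ_succ, ← ihm, ← ihk, show m + 1 + (k + 1) = m + (k + 1) + 1 by omega, LS,
        show m + (k + 1) = m + 1 + k by omega]

def chains (k n m : ℕ) : Finset (Fin k → Fin (n + 1)) :=
  univ.filter fun t => Monotone t ∧ ∀ j, (t j : ℕ) ∈ Icc 1 m

theorem snoc_mem_chains {k n m : ℕ} (s : Fin k → Fin (n + 1)) (x : Fin (n + 1)) :
    (Fin.snoc s x : Fin (k + 1) → Fin (n + 1)) ∈ chains (k + 1) n m ↔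
      s ∈ chains k n x ∧ (x : ℕ) ∈ Icc 1 m := by
  simp only [chains, mem_filter, mem_univ, true_and, Fin.monotone_snoc_iff, Fin.forall_fin_succ',
    Fin.snoc_castSucc, Fin.snoc_last, mem_Icc, Fin.le_def]
  constructor
  · rintro ⟨⟨hs, hx⟩, hb, hxm⟩
    exact ⟨⟨hs, fun j => ⟨(hb j).1, hx j⟩⟩, hxm⟩
  · rintro ⟨⟨hs, hb⟩, hx1, hxm⟩
    exact ⟨⟨hs, fun j => (hb j).2⟩, fun j => ⟨(hb j).1, (hb j).2.trans hxm⟩, hx1, hxm⟩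

theorem sum_fin_ite_mem_Icc {R : Type*} [AddCommMonoid R] {m n : ℕ} (hmn : m ≤ n) (g : ℕ → R) :
    ∑ x : Fin (n + 1), (if (x : ℕ) ∈ Icc 1 m then g x else 0) = ∑ x ∈ Icc 1 m, g x := by
  rw [Fin.sum_univ_eq_sum_range (fun x => if x ∈ Icc 1 m then g x else 0), sum_ite_mem,
    inter_eq_right.mpr fun x hx => by simp at hx ⊢; omega]

theorem sum_chains_prod_eq_chainSum {R : Type*} [CommSemiring R] (f : ℕ → R) (n : ℕ) :
    ∀ {k m : ℕ}, m ≤ n → ∑ t ∈ chains k n m, ∏ j, f (t j) = chainSum f k m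
  | 0, m, _ => by
    rw [chains, filter_true_of_mem fun t _ => ⟨Subsingleton.monotone t, fun j => j.elim0⟩]
    simp [chainSum]
  | k + 1, m, hmn => by
    have hsnoc (x : Fin (n + 1)) :
        ∑ s : Fin k → Fin (n + 1),
          (if (Fin.snoc s x : Fin (k + 1) → Fin (n + 1)) ∈ chains (k + 1) n m
            then ∏ j, f ((Fin.snoc s x : Fin (k + 1) → Fin (n + 1)) j) else 0) =
        if (x : ℕ) ∈ Icc 1 m then f x * chainSum f k x else 0 := by
      split_ifs with hx
      · simp only [snoc_mem_chains, hx, and_true, Fin.prod_univ_castSucc, Fin.snoc_castSucc,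
          Fin.snoc_last]
        rw [← sum_chains_prod_eq_chainSum f n (by simp at hx; omega), mul_sum, ← sum_filter]
        exact sum_congr (by ext; simp [chains]) fun _ _ => mul_comm _ _
      · exact sum_eq_zero fun s _ => if_neg fun h => hx ((snoc_mem_chains s x).1 h).2
    rw [chainSum, ← sum_fin_ite_mem_Icc hmn, ← Fintype.sum_extend_by_zero,
      ← (Fin.snocEquiv _).sum_comp, Fintype.sum_prod_type]
    exact sum_congr rfl fun x _ => hsnoc x

theorem two_mul_choose_two (t : ℕ) : 2 * (t + 1).choose 2 = t * (t + 1) := by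
  rw [Nat.choose_two_right, Nat.add_sub_cancel, mul_comm t]
  exact Nat.mul_div_cancel' (Nat.even_mul_pred_self _ |>.two_dvd)

theorem LS_eq_sum_chains_general (k : ℕ) (n : ℕ) :
    LS (n + k) n =
      2 ^ k *
        ∑ t ∈ Finset.univ.filter
            (fun t : Fin k → Fin (n + 1) =>
              (∀ j₁ j₂ : Fin k, j₁ ≤ j₂ → t j₁ ≤ t j₂) ∧ ∀ j, 1 ≤ (t j : ℕ)),
          ∏ j : Fin k, Nat.choose ((t j : ℕ) + 1) 2 := by
  have hchains : Finset.univ.filter (fun t : Fin k → Fin (n + 1) =>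
      (∀ j₁ j₂ : Fin k, j₁ ≤ j₂ → t j₁ ≤ t j₂) ∧ ∀ j, 1 ≤ (t j : ℕ)) = chains k n n := by
    ext t
    simp [chains, Monotone, Fin.is_le]
  rw [hchains, sum_chains_prod_eq_chainSum (fun t => (t + 1).choose 2) n le_rfl,
    ← chainSum_const_mul, LS_add_self_eq_chainSum]
  simp only [two_mul_choose_two]

/-- `LS(n+k, n) = 2^k · Σ_{1 ≤ t₁ ≤ t₂ ≤ ⋯ ≤ t_k ≤ n} ∏_{j=1}^{k} C(t_j + 1, 2)`. -/
theorem LS_eq_sum_chains (k : ℕ) (hk : 1 ≤ k) (n : ℕ) (hn : 1 ≤ n) :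
    LS (n + k) n =
      2 ^ k *
        ∑ t ∈ Finset.univ.filter
            (fun t : Fin k → Fin (n + 1) =>
              (∀ j₁ j₂ : Fin k, j₁ ≤ j₂ → t j₁ ≤ t j₂) ∧ ∀ j, 1 ≤ (t j : ℕ)),
          ∏ j : Fin k, Nat.choose ((t j : ℕ) + 1) 2 :=
  LS_eq_sum_chains_general k n
end

section
/- Let a ≥ 0 and b be given integers. Then for every rational (or real) x, C(x−b, 2)·C(x, a) = C(a+2, 2)·C(x, a+2) + (a+1)(a−b)·C(x, a+1) + C(a−b, 2)·C(x, a), where C(y, j) denotes the generalized binomial coefficient y(y−1)⋯(y−j+1)/j! for an element y of the field and a natural number j, and C(a+2,2), C(a−b,2) are ordinary integer binomial coefficients m(m−1)/2. -/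
/-!
Rewrite `C(x − b, 2) = C(x − a, 2) + (a − b)(x − a) + C(a − b, 2)` and multiply by `C(x, a)`.
The first two terms are then handled by trinomial revision
`C(x, a) · C(x − a, k) = C(a + k, k) · C(x, a + k)` for `k = 2` and `k = 1`.
-/

/-- The generalized binomial coefficient `C(x, j) = x(x−1)⋯(x−j+1)/j!` for `x : ℚ`. -/
def qchoose (x : ℚ) (j : ℕ) : ℚ :=
  (∏ i ∈ Finset.range j, (x - i)) / (Nat.factorial j)

/-- For an integer `m`, the binomial coefficient `C(m, 2) = m(m−1)/2`. -/
def c2 (m : ℤ) : ℤ := m * (m - 1) / 2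

theorem cast_c2 (m : ℤ) : (c2 m : ℚ) = m * (m - 1) / 2 := by
  rw [c2, Int.cast_div (Int.even_mul_pred_self m).two_dvd (by norm_num)]
  push_cast
  ring

theorem qchoose_eq_ringChoose (x : ℚ) (j : ℕ) : qchoose x j = Ring.choose x j := by
  rw [Ring.choose_eq_smul, ← Polynomial.aeval_eq_smeval, Polynomial.aeval_def,
    ← Polynomial.eval_map, descPochhammer_map, descPochhammer_eval_eq_prod_range, qchoose,
    smul_eq_mul, inv_mul_eq_div]

theorem qchoose_one (y : ℚ) : qchoose y 1 = y := by
  simp [qchoose]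

theorem qchoose_two (y : ℚ) : qchoose y 2 = y * (y - 1) / 2 := by
  simp [qchoose, Finset.prod_range_succ]

theorem qchoose_mul_qchoose_sub (x : ℚ) (j k : ℕ) :
    qchoose x j * qchoose (x - j) k = (j + k).choose k * qchoose x (j + k) := by
  have h := Ring.choose_smul_choose x (Nat.le_add_right j k)
  rw [Nat.add_sub_cancel_left, Nat.choose_symm_add, nsmul_eq_mul] at h
  simp only [qchoose_eq_ringChoose, h]

theorem qchoose_mul_expansion (a : ℕ) (b : ℤ) (x : ℚ) :
    qchoose (x - b) 2 * qchoose x a =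
      (c2 ((a : ℤ) + 2) : ℚ) * qchoose x (a + 2) +
        ((a : ℚ) + 1) * ((a : ℚ) - b) * qchoose x (a + 1) +
        (c2 ((a : ℤ) - b) : ℚ) * qchoose x a := by
  have revision_one := qchoose_mul_qchoose_sub x a 1
  have revision_two := qchoose_mul_qchoose_sub x a 2
  rw [qchoose_one, Nat.choose_one_right] at revision_one
  rw [qchoose_two, Nat.cast_choose_two] at revision_two
  rw [qchoose_two, cast_c2, cast_c2]
  push_cast at revision_one revision_two ⊢
  linear_combination ((a : ℚ) - b) * revision_one + revision_two
end

section
/- Let γ(k,i) be the integers defined by the stated recurrence. Then for every k ≥ 1 and every i with k+2 ≤ i ≤ 3k, the coefficient γ(k,i) is a positive integer. -/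
/-- The coefficients `γ(k, i)`; note `gam 0 i = δ_{i,0}` and `gam k i = 0` for `i < 0`. -/
def gam : ℕ → ℤ → ℤ
  | 0, i => if i = 0 then 1 else 0
  | k + 1, i =>
      c2 (i - (k : ℤ) - 1) * gam k (i - 1) +
        (i - 1) * (i - (k : ℤ) - 2) * gam k (i - 2) +
        c2 (i - 1) * gam k (i - 3)

lemma c2_nonneg (m : ℤ) : 0 ≤ c2 m := by
  have : 0 ≤ m * (m - 1) := by
    rcases le_or_gt m 0 with h | h
    · exact mul_nonneg_of_nonpos_of_nonpos h (by omega)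
    · exact mul_nonneg h.le (by omega)
  exact Int.ediv_nonneg this zero_le_two

lemma c2_pos {m : ℤ} (h : 2 ≤ m) : 0 < c2 m := by
  have : 1 * 2 ≤ m * (m - 1) := by nlinarith
  exact Int.one_pos.trans_le ((Int.le_ediv_iff_mul_le zero_lt_two).2 this)

lemma gam_zero (i : ℤ) : gam 0 i = if i = 0 then 1 else 0 := rfl

lemma gam_succ (k : ℕ) (i : ℤ) :
    gam (k + 1) i = c2 (i - k - 1) * gam k (i - 1) + (i - 1) * (i - k - 2) * gam k (i - 2) +
      c2 (i - 1) * gam k (i - 3) := rfl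

lemma bounds_of_gam_ne_zero (k : ℕ) {i : ℤ} (h : gam k i ≠ 0) :
    (k = 0 ∧ i = 0) ∨ (k + 2 ≤ i ∧ i ≤ 3 * k) := by
  induction k generalizing i with
  | zero => simp_all [gam_zero]
  | succ k ih =>
    right
    rw [gam_succ] at h
    have term_ne_zero : ∀ {c j : ℤ}, c * gam k (i - j) ≠ 0 →
        c ≠ 0 ∧ ((k = 0 ∧ i = j) ∨ (k + 2 ≤ i - j ∧ i - j ≤ 3 * k)) := fun hc => by
      obtain ⟨hc, hg⟩ := mul_ne_zero_iff.1 hc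
      exact ⟨hc, by simpa [sub_eq_zero] using ih hg⟩
    -- `γ(0, ·)` is supported at `0`, where the first two coefficients vanish for `i = 1`, `i = 2`.
    by_cases h₁ : c2 (i - k - 1) * gam k (i - 1) = 0
    · by_cases h₂ : (i - 1) * (i - k - 2) * gam k (i - 2) = 0
      · rw [h₁, h₂, zero_add, zero_add] at h
        rcases term_ne_zero h with ⟨-, ⟨rfl, rfl⟩ | _⟩ <;> omega
      · rcases term_ne_zero h₂ with ⟨hc, ⟨rfl, rfl⟩ | _⟩
        · simp at hc
        · omega
    · rcases term_ne_zero h₁ with ⟨hc, ⟨rfl, rfl⟩ | _⟩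
      · simp [c2] at hc
      · omega

lemma gam_succ_middle_term_nonneg (k : ℕ) (i : ℤ) (h : 0 ≤ gam k (i - 2)) :
    0 ≤ (i - 1) * (i - k - 2) * gam k (i - 2) := by
  by_cases hz : gam k (i - 2) = 0
  · simp [hz]
  · refine mul_nonneg ?_ h
    rcases bounds_of_gam_ne_zero k hz with ⟨rfl, _⟩ | _ <;> exact mul_nonneg (by omega) (by omega)

lemma gam_nonneg (k : ℕ) (i : ℤ) : 0 ≤ gam k i := by
  induction k generalizing i with
  | zero => rw [gam_zero]; split_ifs <;> norm_num
  | succ k ih =>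
    rw [gam_succ]
    exact add_nonneg (add_nonneg (mul_nonneg (c2_nonneg _) (ih _))
      (gam_succ_middle_term_nonneg k i (ih _))) (mul_nonneg (c2_nonneg _) (ih _))

lemma gam_pos_of_le (k : ℕ) (hk : 1 ≤ k) (i : ℤ) (h₁ : k + 2 ≤ i) (h₂ : i ≤ 3 * k) :
    0 < gam k i := by
  induction k, hk using Nat.le_induction generalizing i with
  | base =>
    obtain rfl : i = 3 := by omega
    decide
  | succ k hk ih =>
    have t₁ := mul_nonneg (c2_nonneg (i - k - 1)) (gam_nonneg k (i - 1))
    have t₂ := gam_succ_middle_term_nonneg k i (gam_nonneg k (i - 2))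
    have t₃ := mul_nonneg (c2_nonneg (i - 1)) (gam_nonneg k (i - 3))
    rw [gam_succ]
    rcases lt_trichotomy i (3 * k + 2) with hi | rfl | hi
    · have := mul_pos (c2_pos (by omega : 2 ≤ i - k - 1)) (ih (i - 1) (by omega) (by omega))
      linarith
    · have := mul_pos (mul_pos (by omega : (0 : ℤ) < 3 * k + 2 - 1) (by omega : (0 : ℤ) < 3 * k + 2 - k - 2))
        (ih (3 * k + 2 - 2) (by omega) (by omega))
      linarith
    · have := mul_pos (c2_pos (by omega : 2 ≤ i - 1)) (ih (i - 3) (by omega) (by omega))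
      linarith

theorem gam_pos (k : ℕ) (hk : 1 ≤ k) (i : ℕ) (h1 : k + 2 ≤ i) (h2 : i ≤ 3 * k) :
    0 < gam k (i : ℤ) :=
  gam_pos_of_le k hk i (by omega) (by omega)
end

section
/- For every k ≥ 1, γ(k, 3k) = (3k)! / (k! · 6^k). (Equivalently, γ(k,3k) is the number of partitions of a 3k-element set into blocks of size 3.) -/
/-!
Each step of the recurrence raises the index `i` by at most `3`, so `γ(k, i) = 0` for `i > 3k`.
On the diagonal `i = 3k + 3` only the last term survives, giving
`γ(k + 1, 3k + 3) = C(3k + 2, 2) · γ(k, 3k)`, and this is exactly the recursion satisfied by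
`(3k)! / (k! 6^k)`.
-/

open Nat

lemma two_mul_c2 (m : ℤ) : 2 * c2 m = m * (m - 1) :=
  Int.mul_ediv_cancel' (Int.even_mul_pred_self m).two_dvd

lemma gam_eq_zero_of_lt {k : ℕ} {i : ℤ} (h : 3 * (k : ℤ) < i) : gam k i = 0 := by
  induction k generalizing i with
  | zero => simp only [gam, if_neg (show i ≠ 0 by omega)]
  | succ k ih =>
    rw [gam, ih (by omega), ih (by omega), ih (by omega)]
    ring

lemma gam_succ_diag (k : ℕ) :
    gam (k + 1) (3 * ((k + 1 : ℕ) : ℤ)) = c2 (3 * k + 2) * gam k (3 * k) := by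
  rw [gam, gam_eq_zero_of_lt (i := _ - 1) (by omega), gam_eq_zero_of_lt (i := _ - 2) (by omega),
    mul_zero, mul_zero, zero_add, zero_add]
  congr 2 <;> omega

lemma gam_diag_mul_factorial_mul_six_pow (k : ℕ) :
    gam k (3 * k) * ((k ! : ℤ) * 6 ^ k) = (3 * k)! := by
  induction k with
  | zero => simp [gam]
  | succ k ih =>
    have hfac : ((3 * (k + 1))! : ℤ) = (3 * k + 3) * (3 * k + 2) * (3 * k + 1) * (3 * k)! := by
      rw [show 3 * (k + 1) = 3 * k + 2 + 1 by ring, Nat.factorial_succ, Nat.factorial_succ,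
        Nat.factorial_succ]
      push_cast
      ring
    rw [gam_succ_diag, hfac, ← ih, Nat.factorial_succ]
    push_cast
    linear_combination (3 * (k + 1 : ℤ) * gam k (3 * k) * k ! * 6 ^ k) * two_mul_c2 (3 * k + 2)

theorem gam_top_general (k : ℕ) :
    (gam k (3 * (k : ℤ)) : ℚ) =
      (Nat.factorial (3 * k) : ℚ) / ((Nat.factorial k : ℚ) * 6 ^ k) := by
  rw [eq_div_iff (by positivity)]
  exact_mod_cast gam_diag_mul_factorial_mul_six_pow k

theorem gam_top (k : ℕ) (hk : 1 ≤ k) :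
    (gam k (3 * (k : ℤ)) : ℚ) =
      (Nat.factorial (3 * k) : ℚ) / ((Nat.factorial k : ℚ) * 6 ^ k) :=
  gam_top_general k
end
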